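/- (Surrogate upper bound for the policy guidance objective) Let π_b be a behavior policy of the fixed finite discounted MDP with π_b(s,a) > 0 for all (s,a), let π' be a policy with π'(s,a) > 0 for all (s,a), and let δ_k > 0. Then for every policy π with π(s,a) > 0 for all (s,a) and D^max_KL(π, π') ≤ δ_k, it holds that D^π_KL(π, π_b) ≤ α_k + ∑_s d^{π'}(s) ∑_a π(s,a) A^{π'}_{C_{π'}}(s,a) + (γ/(1−γ)) ε √(2 δ_k) + δ_k, where α_k = D^{π'}_KL(π', π_b) and ε = max_{s,a} |A^{π'}_{C_{π'}}(s,a)|. -/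

import Mathlib

open Finset

/-- Time-`t` state distribution of policy `π` in the MDP with transitions `P`
and initial distribution `μ`. -/
noncomputable def pDist {S A : Type*} [Fintype S] [Fintype A]
    (P : S → A → S → ℝ) (μ : S → ℝ) (π : S → A → ℝ) : ℕ → S → ℝ
  | 0 => μ
  | t + 1 => fun s' => ∑ s, ∑ a, pDist P μ π t s * π s a * P s a s'

/-- Discounted state visitation distribution `d^π`. -/
noncomputable def dvisit {S A : Type*} [Fintype S] [Fintype A]
    (P : S → A → S → ℝ) (μ : S → ℝ) (γ : ℝ) (π : S → A → ℝ) (s : S) : ℝ :=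
  (1 - γ) * ∑' t : ℕ, γ ^ t * pDist P μ π t s

/-- Discounted return `J_R(π)`. -/
noncomputable def Jret {S A : Type*} [Fintype S] [Fintype A]
    (P : S → A → S → ℝ) (μ : S → ℝ) (γ : ℝ) (R : S → A → ℝ) (π : S → A → ℝ) : ℝ :=
  ∑' t : ℕ, γ ^ t * ∑ s, ∑ a, pDist P μ π t s * π s a * R s a

/-- Advantage function `A_R^π(s,a) = Q_R^π(s,a) - V_R^π(s)`, expressed in terms of
the value function `V` of the policy. -/
noncomputable def Adv {S A : Type*} [Fintype S]
    (P : S → A → S → ℝ) (γ : ℝ) (R : S → A → ℝ) (V : S → ℝ) (s : S) (a : A) : ℝ :=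
  (R s a + γ * ∑ s', P s a s' * V s') - V s

/-- KL divergence between two distributions on a finite type. -/
noncomputable def KL {X : Type*} [Fintype X] (p q : X → ℝ) : ℝ :=
  ∑ x, p x * Real.log (p x / q x)

/-- Total variation distance between two distributions on a finite type. -/
noncomputable def TV {X : Type*} [Fintype X] (p q : X → ℝ) : ℝ :=
  (1 / 2) * ∑ x, |p x - q x|

/-!
Split `KL(π, π_b) = KL(π, π') + ∑ π log (π'/π_b)` state by state; the first part averages to
at most `δ_k`. For any policy `ρ`, the Bellman flow equation `d^ρ = (1 - γ) μ + γ d^ρ P_ρ`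
turns `∑_s d^ρ ∑_a ρ C` into `∑_s d^ρ ∑_a ρ A_C + (1 - γ) ⟨μ, V⟩`; for `ρ = π'` the advantage
term vanishes by the Bellman equation of `V'`, which identifies `α_k`. Replacing `d^π` by
`d^{π'}` in front of the advantages costs at most `2 TV(d^π, d^{π'}) ε`, and the flow equation
also gives `TV(d^π, d^{π'}) ≤ γ/(1 - γ) max_s TV(π_s, π'_s)`, which Pinsker's inequality bounds
by `γ/(1 - γ) √(δ_k/2)`.
-/

theorem Real.sub_one_mul_div_le_log {t : ℝ} (ht : 0 < t) :
    (t - 1) * (5 * t + 1) / (2 * t * (t + 2)) ≤ Real.log t := by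
  set h : ℝ → ℝ := fun t => Real.log t - (t - 1) * (5 * t + 1) / (2 * t * (t + 2))
  have hderiv : ∀ x, 0 < x → HasDerivAt h ((x - 1) ^ 3 / (x ^ 2 * (x + 2) ^ 2)) x := by
    intro x hx
    have hnum := ((hasDerivAt_id' x).sub_const 1).fun_mul
      (((hasDerivAt_id' x).const_mul 5).add_const 1)
    have hden := ((hasDerivAt_id' x).const_mul 2).fun_mul ((hasDerivAt_id' x).add_const 2)
    refine ((Real.hasDerivAt_log hx.ne').fun_sub
      (hnum.fun_div hden (by positivity))).congr_deriv ?_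
    field_simp
    ring
  have hcont : ContinuousOn h (Set.Ioi 0) := fun x hx =>
    (hderiv x hx).continuousAt.continuousWithinAt
  have h1 : h 1 = 0 := by norm_num [h]
  suffices 0 ≤ h t by simpa [h, sub_nonneg] using this
  rcases le_total t 1 with ht1 | ht1
  · have hanti : AntitoneOn h (Set.Ioc 0 1) := by
      refine antitoneOn_of_hasDerivWithinAt_nonpos (convex_Ioc 0 1)
        (hcont.mono Set.Ioc_subset_Ioi_self)
        (fun x hx => (hderiv x (interior_subset hx).1).hasDerivWithinAt) fun x hx => ?_
      rw [interior_Ioc] at hx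
      have hcube : (x - 1) ^ 3 ≤ 0 := (Odd.pow_nonpos_iff (by decide)).2 (by linarith [hx.2])
      exact div_nonpos_of_nonpos_of_nonneg hcube (by positivity)
    exact h1 ▸ hanti ⟨ht, ht1⟩ ⟨one_pos, le_rfl⟩ ht1
  · have hmono : MonotoneOn h (Set.Ici 1) := by
      refine monotoneOn_of_hasDerivWithinAt_nonneg (convex_Ici 1)
        (hcont.mono fun _ hx => Set.mem_Ioi.2 (one_pos.trans_le hx))
        (fun x hx => (hderiv x (one_pos.trans_le (interior_subset hx))).hasDerivWithinAt)
        fun x hx => ?_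
      rw [interior_Ici] at hx
      have hcube : 0 ≤ (x - 1) ^ 3 := pow_nonneg (by linarith [hx.out]) 3
      positivity
    exact h1 ▸ hmono Set.self_mem_Ici ht1 ht1

lemma sq_sub_div_le_mul_log_div_sub_add {a b : ℝ} (ha : 0 ≤ a) (hb : 0 < b) :
    3 * (a - b) ^ 2 / (2 * (a + 2 * b)) ≤ a * Real.log (a / b) - a + b := by
  rcases ha.eq_or_lt with rfl | ha
  · rw [div_le_iff₀ (by positivity)]
    nlinarith
  have hlog := mul_le_mul_of_nonneg_left (Real.sub_one_mul_div_le_log (div_pos ha hb)) ha.le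
  have hrational : a * ((a / b - 1) * (5 * (a / b) + 1) / (2 * (a / b) * (a / b + 2)))
      = 3 * (a - b) ^ 2 / (2 * (a + 2 * b)) + a - b := by
    field_simp
    ring
  linarith

section Divergences

variable {X : Type*} [Fintype X]

/-- Pinsker's inequality, via Cauchy–Schwarz with the weights `p + 2q`. -/
theorem TV_le_sqrt_KL {p q : X → ℝ} (hp0 : ∀ x, 0 ≤ p x) (hq0 : ∀ x, 0 < q x)
    (hp1 : ∑ x, p x = 1) (hq1 : ∑ x, q x = 1) :
    TV p q ≤ Real.sqrt (KL p q / 2) := by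
  have hw : ∀ x ∈ univ, 0 < p x + 2 * q x := fun x _ => by linarith [hp0 x, hq0 x]
  have hcs := sq_sum_div_le_sum_sq_div univ (fun x => |p x - q x|) hw
  have hmass : ∑ x, (p x + 2 * q x) = 3 := by
    rw [sum_add_distrib, ← mul_sum, hp1, hq1]
    norm_num
  have hKL : ∑ x, 3 * (p x - q x) ^ 2 / (2 * (p x + 2 * q x)) ≤ KL p q := by
    calc _ ≤ ∑ x, (p x * Real.log (p x / q x) - p x + q x) :=
          sum_le_sum fun x _ => sq_sub_div_le_mul_log_div_sub_add (hp0 x) (hq0 x)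
      _ = KL p q := by simp only [KL, sum_add_distrib, sum_sub_distrib, hp1, hq1]; ring
  have hrescale : ∑ x, 3 * (p x - q x) ^ 2 / (2 * (p x + 2 * q x))
      = 3 / 2 * ∑ x, |p x - q x| ^ 2 / (p x + 2 * q x) := by
    rw [mul_sum]
    congr! 1 with x
    rw [sq_abs]
    field_simp
  refine (le_abs_self _).trans (Real.abs_le_sqrt ?_)
  rw [hmass] at hcs
  simp only [TV]
  nlinarith

lemma KL_eq_KL_add_sum_mul_log_div {p q r : X → ℝ} (hq : ∀ x, q x ≠ 0) (hr : ∀ x, r x ≠ 0) :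
    KL p r = KL p q + ∑ x, p x * Real.log (q x / r x) := by
  simp only [KL, ← sum_add_distrib, ← mul_add]
  refine sum_congr rfl fun x _ => ?_
  rcases eq_or_ne (p x) 0 with hp | hp
  · simp [hp]
  rw [Real.log_div hp (hr x), Real.log_div hp (hq x), Real.log_div (hq x) (hr x)]
  ring

lemma sum_mul_KL_le_add_sum_mul_log_div {ι : Type*} [Fintype ι] {w : ι → ℝ}
    (hw0 : ∀ i, 0 ≤ w i) (hw1 : ∑ i, w i = 1) {p q r : ι → X → ℝ} (hq : ∀ i x, q i x ≠ 0)
    (hr : ∀ i x, r i x ≠ 0) {δ : ℝ} (hKL : ∀ i, KL (p i) (q i) ≤ δ) :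
    ∑ i, w i * KL (p i) (r i) ≤ δ + ∑ i, w i * ∑ x, p i x * Real.log (q i x / r i x) := by
  have hsplit : ∀ i, w i * KL (p i) (r i)
      = w i * KL (p i) (q i) + w i * ∑ x, p i x * Real.log (q i x / r i x) := fun i => by
    rw [KL_eq_KL_add_sum_mul_log_div (hq i) (hr i), mul_add]
  simp only [hsplit, sum_add_distrib]
  gcongr
  calc ∑ i, w i * KL (p i) (q i) ≤ ∑ i, w i * δ :=
        sum_le_sum fun i _ => mul_le_mul_of_nonneg_left (hKL i) (hw0 i)
    _ = δ := by rw [← sum_mul, hw1, one_mul]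

lemma sum_mul_sub_sum_mul_le_two_mul_TV (p q f : X → ℝ) {M : ℝ} (hf : ∀ x, |f x| ≤ M) :
    ∑ x, p x * f x - ∑ x, q x * f x ≤ 2 * TV p q * M := by
  calc ∑ x, p x * f x - ∑ x, q x * f x = ∑ x, (p x - q x) * f x := by
        simp only [← sum_sub_distrib, sub_mul]
    _ ≤ ∑ x, |p x - q x| * M := sum_le_sum fun x _ => (le_abs_self _).trans <| by
        rw [abs_mul]
        exact mul_le_mul_of_nonneg_left (hf x) (abs_nonneg _)
    _ = 2 * TV p q * M := by rw [TV, ← sum_mul]; ring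

lemma abs_sum_mul_le {w f : X → ℝ} (hw0 : ∀ x, 0 ≤ w x) (hw1 : ∑ x, w x = 1) {M : ℝ}
    (hf : ∀ x, |f x| ≤ M) : |∑ x, w x * f x| ≤ M := by
  calc |∑ x, w x * f x| ≤ ∑ x, |w x * f x| := abs_sum_le_sum_abs _ _
    _ ≤ ∑ x, w x * M := sum_le_sum fun x _ => by
        rw [abs_mul, abs_of_nonneg (hw0 x)]
        exact mul_le_mul_of_nonneg_left (hf x) (hw0 x)
    _ = M := by rw [← sum_mul, hw1, one_mul]

end Divergences

section StateDistribution

variable {S A : Type*} [Fintype S] [Fintype A] {P : S → A → S → ℝ} {ρ ρ' : S → A → ℝ}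
  {μ : S → ℝ} {γ : ℝ}

variable (P ρ) in
def stepDist (q : S → ℝ) (s' : S) : ℝ :=
  ∑ s, ∑ a, q s * ρ s a * P s a s'

lemma sum_stepDist_mul (q V : S → ℝ) :
    ∑ s', stepDist P ρ q s' * V s' = ∑ s, q s * ∑ a, ρ s a * ∑ s', P s a s' * V s' := by
  simp only [stepDist, sum_mul, mul_sum]
  rw [sum_comm]
  refine sum_congr rfl fun s _ => ?_
  rw [sum_comm]
  exact sum_congr rfl fun a _ => sum_congr rfl fun s' _ => by ring

lemma sum_stepDist (hP1 : ∀ s a, ∑ s', P s a s' = 1) (hρ1 : ∀ s, ∑ a, ρ s a = 1)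
    (q : S → ℝ) : ∑ s', stepDist P ρ q s' = ∑ s, q s := by
  simpa [hP1, hρ1] using sum_stepDist_mul (P := P) (ρ := ρ) q 1

lemma stepDist_nonneg (hP0 : ∀ s a s', 0 ≤ P s a s') (hρ0 : ∀ s a, 0 ≤ ρ s a) {q : S → ℝ}
    (hq0 : ∀ s, 0 ≤ q s) (s' : S) : 0 ≤ stepDist P ρ q s' :=
  sum_nonneg fun s _ => sum_nonneg fun a _ =>
    mul_nonneg (mul_nonneg (hq0 s) (hρ0 s a)) (hP0 s a s')

lemma sum_abs_stepDist_sub_le (hP0 : ∀ s a s', 0 ≤ P s a s')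
    (hP1 : ∀ s a, ∑ s', P s a s' = 1) (hρ0 : ∀ s a, 0 ≤ ρ s a) (hρ1 : ∀ s, ∑ a, ρ s a = 1)
    {q q' : S → ℝ} (hq'0 : ∀ s, 0 ≤ q' s) :
    ∑ s', |stepDist P ρ q s' - stepDist P ρ' q' s'|
      ≤ ∑ s, |q s - q' s| + ∑ s, q' s * ∑ a, |ρ s a - ρ' s a| := by
  have hstep : ∀ s', |stepDist P ρ q s' - stepDist P ρ' q' s'|
      ≤ ∑ s, ∑ a, |q s * ρ s a - q' s * ρ' s a| * P s a s' := fun s' => by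
    simp only [stepDist, ← sum_sub_distrib, ← sub_mul]
    refine (abs_sum_le_sum_abs _ _).trans (sum_le_sum fun s _ => ?_)
    refine (abs_sum_le_sum_abs _ _).trans (sum_le_sum fun a _ => ?_)
    rw [abs_mul, abs_of_nonneg (hP0 s a s')]
  have hsplit : ∀ s a, |q s * ρ s a - q' s * ρ' s a|
      ≤ |q s - q' s| * ρ s a + q' s * |ρ s a - ρ' s a| := fun s a => by
    calc _ = |(q s - q' s) * ρ s a + q' s * (ρ s a - ρ' s a)| := by ring_nf
      _ ≤ _ := by
        refine (abs_add_le _ _).trans_eq ?_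
        rw [abs_mul, abs_mul, abs_of_nonneg (hρ0 s a), abs_of_nonneg (hq'0 s)]
  calc _ ≤ ∑ s', ∑ s, ∑ a, |q s * ρ s a - q' s * ρ' s a| * P s a s' :=
        sum_le_sum fun s' _ => hstep s'
    _ = ∑ s, ∑ a, |q s * ρ s a - q' s * ρ' s a| := by
      rw [sum_comm]
      refine sum_congr rfl fun s _ => ?_
      rw [sum_comm]
      exact sum_congr rfl fun a _ => by rw [← mul_sum, hP1, mul_one]
    _ ≤ ∑ s, ∑ a, (|q s - q' s| * ρ s a + q' s * |ρ s a - ρ' s a|) :=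
      sum_le_sum fun s _ => sum_le_sum fun a _ => hsplit s a
    _ = _ := by simp only [sum_add_distrib, ← mul_sum, hρ1, mul_one]

lemma pDist_succ (t : ℕ) : pDist P μ ρ (t + 1) = stepDist P ρ (pDist P μ ρ t) := rfl

lemma pDist_nonneg (hP0 : ∀ s a s', 0 ≤ P s a s') (hμ0 : ∀ s, 0 ≤ μ s)
    (hρ0 : ∀ s a, 0 ≤ ρ s a) (t : ℕ) (s : S) : 0 ≤ pDist P μ ρ t s := by
  induction t generalizing s with
  | zero => exact hμ0 s
  | succ t ih => exact stepDist_nonneg hP0 hρ0 ih s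

lemma sum_pDist (hP1 : ∀ s a, ∑ s', P s a s' = 1) (hμ1 : ∑ s, μ s = 1)
    (hρ1 : ∀ s, ∑ a, ρ s a = 1) (t : ℕ) : ∑ s, pDist P μ ρ t s = 1 := by
  induction t with
  | zero => exact hμ1
  | succ t ih => rw [pDist_succ, sum_stepDist hP1 hρ1, ih]

lemma summable_pow_mul_pDist (hγ0 : 0 ≤ γ) (hγ1 : γ < 1)
    (hP0 : ∀ s a s', 0 ≤ P s a s') (hP1 : ∀ s a, ∑ s', P s a s' = 1)
    (hμ0 : ∀ s, 0 ≤ μ s) (hμ1 : ∑ s, μ s = 1)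
    (hρ0 : ∀ s a, 0 ≤ ρ s a) (hρ1 : ∀ s, ∑ a, ρ s a = 1) (s : S) :
    Summable fun t => γ ^ t * pDist P μ ρ t s := by
  refine (summable_geometric_of_lt_one hγ0 hγ1).of_nonneg_of_le
    (fun t => mul_nonneg (pow_nonneg hγ0 t) (pDist_nonneg hP0 hμ0 hρ0 t s)) fun t => ?_
  refine mul_le_of_le_one_right (pow_nonneg hγ0 t) ?_
  rw [← sum_pDist hP1 hμ1 hρ1 t]
  exact single_le_sum (fun s _ => pDist_nonneg hP0 hμ0 hρ0 t s) (mem_univ s)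

lemma dvisit_nonneg (hγ0 : 0 ≤ γ) (hγ1 : γ ≤ 1) (hP0 : ∀ s a s', 0 ≤ P s a s')
    (hμ0 : ∀ s, 0 ≤ μ s) (hρ0 : ∀ s a, 0 ≤ ρ s a) (s : S) : 0 ≤ dvisit P μ γ ρ s :=
  mul_nonneg (sub_nonneg.2 hγ1) <| tsum_nonneg fun t =>
    mul_nonneg (pow_nonneg hγ0 t) (pDist_nonneg hP0 hμ0 hρ0 t s)

def SatisfiesBellmanFlow (P : S → A → S → ℝ) (μ : S → ℝ) (γ : ℝ) (ρ : S → A → ℝ) (d : S → ℝ) :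
    Prop :=
  ∀ s', d s' = (1 - γ) * μ s' + γ * stepDist P ρ d s'

lemma dvisit_satisfiesBellmanFlow (hγ0 : 0 ≤ γ) (hγ1 : γ < 1)
    (hP0 : ∀ s a s', 0 ≤ P s a s') (hP1 : ∀ s a, ∑ s', P s a s' = 1)
    (hμ0 : ∀ s, 0 ≤ μ s) (hμ1 : ∑ s, μ s = 1)
    (hρ0 : ∀ s a, 0 ≤ ρ s a) (hρ1 : ∀ s, ∑ a, ρ s a = 1) :
    SatisfiesBellmanFlow P μ γ ρ (dvisit P μ γ ρ) := by
  intro s'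
  have hsum := summable_pow_mul_pDist hγ0 hγ1 hP0 hP1 hμ0 hμ1 hρ0 hρ1
  have htail : HasSum (fun t => γ ^ (t + 1) * pDist P μ ρ (t + 1) s')
      (∑ s, ∑ a, γ * ((∑' t, γ ^ t * pDist P μ ρ t s) * ρ s a * P s a s')) := by
    have hterm : (fun t => γ ^ (t + 1) * pDist P μ ρ (t + 1) s')
        = fun t => ∑ s, ∑ a, γ * (γ ^ t * pDist P μ ρ t s * ρ s a * P s a s') := by
      funext t
      simp only [pDist_succ, stepDist, mul_sum, pow_succ]
      exact sum_congr rfl fun s _ => sum_congr rfl fun a _ => by ring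
    rw [hterm]
    exact hasSum_sum fun s _ => hasSum_sum fun a _ =>
      (((hsum s).hasSum.mul_right (ρ s a)).mul_right (P s a s')).mul_left γ
  rw [dvisit, (hsum s').tsum_eq_zero_add, htail.tsum_eq]
  simp only [stepDist, dvisit, pow_zero, one_mul, pDist, mul_add, mul_sum]
  congr 1
  exact sum_congr rfl fun s _ => sum_congr rfl fun a _ => by ring

lemma sum_mul_Adv_eq_zero {C : S → A → ℝ} {V : S → ℝ} {s : S} (hρ1 : ∑ a, ρ s a = 1)
    (hV : V s = ∑ a, ρ s a * (C s a + γ * ∑ s', P s a s' * V s')) :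
    ∑ a, ρ s a * Adv P γ C V s a = 0 := by
  simp only [Adv, mul_sub, sum_sub_distrib, ← sum_mul, hρ1, one_mul]
  exact sub_eq_zero.2 hV.symm

namespace SatisfiesBellmanFlow

variable {d d' : S → ℝ}

lemma sum_mul_eq (hd : SatisfiesBellmanFlow P μ γ ρ d) (V : S → ℝ) :
    ∑ s, d s * V s
      = (1 - γ) * ∑ s, μ s * V s + γ * ∑ s, d s * ∑ a, ρ s a * ∑ s', P s a s' * V s' := by
  calc ∑ s, d s * V s = ∑ s, ((1 - γ) * μ s + γ * stepDist P ρ d s) * V s :=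
        sum_congr rfl fun s _ => by rw [← hd]
    _ = _ := by simp only [add_mul, sum_add_distrib, mul_assoc, ← mul_sum, sum_stepDist_mul]

lemma sum_eq_one (hd : SatisfiesBellmanFlow P μ γ ρ d) (hγ1 : γ ≠ 1)
    (hP1 : ∀ s a, ∑ s', P s a s' = 1) (hρ1 : ∀ s, ∑ a, ρ s a = 1) (hμ1 : ∑ s, μ s = 1) :
    ∑ s, d s = 1 := by
  have h := hd.sum_mul_eq 1
  simp only [Pi.one_apply, mul_one, hP1, hρ1, hμ1] at h
  have : (1 - γ) * (∑ s, d s - 1) = 0 := by linarith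
  simpa [sub_eq_zero, hγ1.symm] using this

lemma sum_mul_sum_mul_Adv (hd : SatisfiesBellmanFlow P μ γ ρ d) (hρ1 : ∀ s, ∑ a, ρ s a = 1)
    (C : S → A → ℝ) (V : S → ℝ) :
    ∑ s, d s * ∑ a, ρ s a * Adv P γ C V s a
      = ∑ s, d s * ∑ a, ρ s a * C s a - (1 - γ) * ∑ s, μ s * V s := by
  have hAdv : ∀ s, ∑ a, ρ s a * Adv P γ C V s a
      = ∑ a, ρ s a * C s a + γ * ∑ a, ρ s a * ∑ s', P s a s' * V s' - V s := fun s => by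
    rw [← one_mul (V s), ← hρ1 s, sum_mul, mul_sum, ← sum_add_distrib, ← sum_sub_distrib]
    exact sum_congr rfl fun a _ => by rw [Adv]; ring
  have := hd.sum_mul_eq V
  simp only [hAdv, mul_sub, mul_add, sum_sub_distrib, sum_add_distrib, mul_left_comm _ γ,
    ← mul_sum]
  linarith

lemma TV_le (hd : SatisfiesBellmanFlow P μ γ ρ d) (hd' : SatisfiesBellmanFlow P μ γ ρ' d')
    (hγ0 : 0 ≤ γ) (hγ1 : γ < 1) (hP0 : ∀ s a s', 0 ≤ P s a s')
    (hP1 : ∀ s a, ∑ s', P s a s' = 1) (hρ0 : ∀ s a, 0 ≤ ρ s a) (hρ1 : ∀ s, ∑ a, ρ s a = 1)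
    (hd'0 : ∀ s, 0 ≤ d' s) (hd'1 : ∑ s, d' s = 1)
    {c : ℝ} (hc : ∀ s, TV (ρ s) (ρ' s) ≤ c) : TV d d' ≤ γ / (1 - γ) * c := by
  have hdiff : ∑ s, |d s - d' s| = γ * ∑ s, |stepDist P ρ d s - stepDist P ρ' d' s| := by
    rw [mul_sum]
    refine sum_congr rfl fun s _ => ?_
    rw [hd s, hd' s, ← abs_of_nonneg hγ0, ← abs_mul, abs_of_nonneg hγ0]
    ring_nf
  have hpolicy : ∑ s, d' s * ∑ a, |ρ s a - ρ' s a| ≤ 2 * c := by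
    calc _ ≤ ∑ s, d' s * (2 * c) := sum_le_sum fun s _ => by
          have := hc s
          rw [TV] at this
          exact mul_le_mul_of_nonneg_left (by linarith) (hd'0 s)
      _ = 2 * c := by rw [← sum_mul, hd'1, one_mul]
  have hstep := sum_abs_stepDist_sub_le (ρ' := ρ') (q := d) hP0 hP1 hρ0 hρ1 hd'0
  have : (1 - γ) * ∑ s, |d s - d' s| ≤ γ * (2 * c) := by nlinarith
  rw [TV, div_mul_eq_mul_div γ, le_div_iff₀ (by linarith)]
  linarith

lemma sum_mul_sum_mul_eq_of_bellman (hd : SatisfiesBellmanFlow P μ γ ρ d)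
    (hρ1 : ∀ s, ∑ a, ρ s a = 1) {C : S → A → ℝ} {V : S → ℝ}
    (hV : ∀ s, V s = ∑ a, ρ s a * (C s a + γ * ∑ s', P s a s' * V s')) :
    ∑ s, d s * ∑ a, ρ s a * C s a = (1 - γ) * ∑ s, μ s * V s := by
  have h := hd.sum_mul_sum_mul_Adv hρ1 C V
  simp only [sum_mul_Adv_eq_zero (hρ1 _) (hV _), mul_zero, sum_const_zero] at h
  linarith

end SatisfiesBellmanFlow

end StateDistribution

theorem stmt_12_general {S A : Type*} [Fintype S] [Fintype A]
    (P : S → A → S → ℝ)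
    (hP0 : ∀ s a s', 0 ≤ P s a s') (hP1 : ∀ s a, ∑ s', P s a s' = 1)
    (γ : ℝ) (hγ0 : 0 < γ) (hγ1 : γ < 1)
    (μ : S → ℝ) (hμ0 : ∀ s, 0 ≤ μ s) (hμ1 : ∑ s, μ s = 1)
    (πb : S → A → ℝ) (hπb0 : ∀ s a, 0 < πb s a)
    (π' : S → A → ℝ) (hπ'0 : ∀ s a, 0 < π' s a) (hπ'1 : ∀ s, ∑ a, π' s a = 1)
    (V' : S → ℝ)
    (hV' : ∀ s, V' s = ∑ a, π' s a *
      (Real.log (π' s a / πb s a) + γ * ∑ s', P s a s' * V' s'))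
    (δk : ℝ)
    (π : S → A → ℝ) (hπ0 : ∀ s a, 0 < π s a) (hπ1 : ∀ s, ∑ a, π s a = 1)
    (hπKL : (⨆ s, KL (π s) (π' s)) ≤ δk) :
    ∑ s, dvisit P μ γ π s * KL (π s) (πb s) ≤
      (∑ s, dvisit P μ γ π' s * KL (π' s) (πb s)) +
        (∑ s, dvisit P μ γ π' s *
          ∑ a, π s a * Adv P γ (fun s a => Real.log (π' s a / πb s a)) V' s a) +
        (γ / (1 - γ)) *
          (⨆ s, ⨆ a, |Adv P γ (fun s a => Real.log (π' s a / πb s a)) V' s a|) *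
          Real.sqrt (2 * δk) +
        δk := by
  set C : S → A → ℝ := fun s a => Real.log (π' s a / πb s a)
  set E := ⨆ s, ⨆ a, |Adv P γ C V' s a|
  have hE : ∀ s a, |Adv P γ C V' s a| ≤ E := fun s a =>
    Finite.le_ciSup_of_le s (Finite.le_ciSup_of_le a le_rfl)
  have hE0 : 0 ≤ E := Real.iSup_nonneg fun s => Real.iSup_nonneg fun a => abs_nonneg _
  have hKL : ∀ s, KL (π s) (π' s) ≤ δk := fun s => (Finite.le_ciSup_of_le s le_rfl).trans hπKL
  have hπ0' : ∀ s a, 0 ≤ π s a := fun s a => (hπ0 s a).le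
  have hπ'0' : ∀ s a, 0 ≤ π' s a := fun s a => (hπ'0 s a).le
  have hflow := dvisit_satisfiesBellmanFlow hγ0.le hγ1 hP0 hP1 hμ0 hμ1 hπ0' hπ1
  have hflow' := dvisit_satisfiesBellmanFlow hγ0.le hγ1 hP0 hP1 hμ0 hμ1 hπ'0' hπ'1
  have hsplit := sum_mul_KL_le_add_sum_mul_log_div (dvisit_nonneg hγ0.le hγ1.le hP0 hμ0 hπ0')
    (hflow.sum_eq_one hγ1.ne hP1 hπ1 hμ1) (fun s a => (hπ'0 s a).ne') (fun s a => (hπb0 s a).ne')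
    hKL
  have hret := hflow.sum_mul_sum_mul_Adv hπ1 C V'
  have hα : ∑ s, dvisit P μ γ π' s * KL (π' s) (πb s) = (1 - γ) * ∑ s, μ s * V' s :=
    hflow'.sum_mul_sum_mul_eq_of_bellman hπ'1 hV'
  have hshift := sum_mul_sub_sum_mul_le_two_mul_TV (dvisit P μ γ π) (dvisit P μ γ π')
    (fun s => ∑ a, π s a * Adv P γ C V' s a) fun s => abs_sum_mul_le (hπ0' s) (hπ1 s) (hE s)
  have hTV : TV (dvisit P μ γ π) (dvisit P μ γ π') ≤ γ / (1 - γ) * Real.sqrt (δk / 2) :=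
    hflow.TV_le hflow' hγ0.le hγ1 hP0 hP1 hπ0' hπ1
      (dvisit_nonneg hγ0.le hγ1.le hP0 hμ0 hπ'0') (hflow'.sum_eq_one hγ1.ne hP1 hπ'1 hμ1)
      fun s => (TV_le_sqrt_KL (hπ0' s) (hπ'0 s) (hπ1 s) (hπ'1 s)).trans
        (Real.sqrt_le_sqrt (by linarith [hKL s]))
  have hcost : 2 * TV (dvisit P μ γ π) (dvisit P μ γ π') * E
      ≤ γ / (1 - γ) * E * Real.sqrt (2 * δk) := by
    calc _ ≤ 2 * (γ / (1 - γ) * Real.sqrt (δk / 2)) * E := by gcongr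
      _ = γ / (1 - γ) * E * (Real.sqrt (2 ^ 2) * Real.sqrt (δk / 2)) := by
        rw [Real.sqrt_sq zero_le_two]; ring
      _ = _ := by rw [← Real.sqrt_mul (by positivity)]; ring_nf
  linarith

/-- **Surrogate upper bound for the policy guidance objective.** For every
everywhere-positive policy `π` with `D^max_KL(π, π') ≤ δ_k`,
`D^π_KL(π, π_b) ≤ α_k + ∑_s d^{π'}(s) ∑_a π(s,a) A^{π'}_{C_{π'}}(s,a)
  + (γ/(1−γ)) ε √(2 δ_k) + δ_k`,
where `α_k = D^{π'}_KL(π', π_b)` and `ε = max_{s,a} |A^{π'}_{C_{π'}}(s,a)|`. -/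
theorem stmt_12 {S A : Type*} [Fintype S] [Fintype A] [Nonempty S] [Nonempty A]
    (P : S → A → S → ℝ)
    (hP0 : ∀ s a s', 0 ≤ P s a s') (hP1 : ∀ s a, ∑ s', P s a s' = 1)
    (γ : ℝ) (hγ0 : 0 < γ) (hγ1 : γ < 1)
    (μ : S → ℝ) (hμ0 : ∀ s, 0 ≤ μ s) (hμ1 : ∑ s, μ s = 1)
    (πb : S → A → ℝ) (hπb0 : ∀ s a, 0 < πb s a) (hπb1 : ∀ s, ∑ a, πb s a = 1)
    (π' : S → A → ℝ) (hπ'0 : ∀ s a, 0 < π' s a) (hπ'1 : ∀ s, ∑ a, π' s a = 1)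
    (V' : S → ℝ)
    (hV' : ∀ s, V' s = ∑ a, π' s a *
      (Real.log (π' s a / πb s a) + γ * ∑ s', P s a s' * V' s'))
    (δk : ℝ) (hδk : 0 < δk)
    (π : S → A → ℝ) (hπ0 : ∀ s a, 0 < π s a) (hπ1 : ∀ s, ∑ a, π s a = 1)
    (hπKL : (⨆ s, KL (π s) (π' s)) ≤ δk) :
    ∑ s, dvisit P μ γ π s * KL (π s) (πb s) ≤
      (∑ s, dvisit P μ γ π' s * KL (π' s) (πb s)) +
        (∑ s, dvisit P μ γ π' s *
          ∑ a, π s a * Adv P γ (fun s a => Real.log (π' s a / πb s a)) V' s a) +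
        (γ / (1 - γ)) *
          (⨆ s, ⨆ a, |Adv P γ (fun s a => Real.log (π' s a / πb s a)) V' s a|) *
          Real.sqrt (2 * δk) +
        δk :=
  stmt_12_general P hP0 hP1 γ hγ0 hγ1 μ hμ0 hμ1 πb hπb0 π' hπ'0 hπ'1 V' hV' δk π hπ0 hπ1 hπKL
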